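/- arXiv:1602.00075 — 8 statements merged into one kernel-verified Lean document; each statement's English description precedes it below -/
import Mathlib

section
/- Let (X, f_{1,∞}) be a finitely generated NADS in which every map f_i is uniformly continuous. If f_{1,∞} has sensitive dependence on initial conditions, then for every positive integer k, the k-th iterate system f_{1,∞}^{[k]} also has sensitive dependence on initial conditions. -/
/-- `traj f n = f_n ∘ ⋯ ∘ f_1` (with `f i` denoting `f_{i+1}`), i.e. `f_1^n`. -/
def traj {X : Type*} (f : ℕ → X → X) : ℕ → X → X
  | 0 => id
  | n + 1 => f n ∘ traj f n

/-- Sensitive dependence on initial conditions for the NADS `f_{1,∞}`. -/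
def Sensitive {X : Type*} [MetricSpace X] (f : ℕ → X → X) : Prop :=
  ∃ δ > 0, ∀ x : X, ∀ ε > 0, ∃ y : X, ∃ n > 0,
    dist x y < ε ∧ dist (traj f n x) (traj f n y) > δ

/-- A finitely generated NADS: all maps `f_i` lie in a finite set of maps. -/
def FinGen {X : Type*} (f : ℕ → X → X) : Prop :=
  ∃ F : Set (X → X), F.Finite ∧ ∀ i, f i ∈ F

/-- A common modulus of uniform continuity for all maps of a finitely generated NADS. -/
lemma common_mod {X : Type*} [MetricSpace X] (f : ℕ → X → X)
    (hu : ∀ i, UniformContinuous (f i)) (hfg : FinGen f) :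
    ∀ ε > 0, ∃ η > 0, ∀ i, ∀ a b : X, dist a b < η → dist (f i a) (f i b) < ε := by
  obtain ⟨F, hF, hmem⟩ := hfg
  intro ε hε
  have hrange : (Set.range f).Finite := hF.subset (Set.range_subset_iff.mpr hmem)
  have key : ∀ g ∈ hrange.toFinset, ∃ η > 0,
      ∀ a b : X, dist a b < η → dist (g a) (g b) < ε := by
    intro g hg
    rw [Set.Finite.mem_toFinset] at hg
    obtain ⟨i, rfl⟩ := hg
    obtain ⟨η, hη, h⟩ := Metric.uniformContinuous_iff.mp (hu i) ε hε
    exact ⟨η, hη, fun a b hab => h hab⟩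
  choose η hηpos hη using key
  have hne : hrange.toFinset.attach.Nonempty := by
    refine Finset.attach_nonempty_iff.mpr ⟨f 0, ?_⟩
    rw [Set.Finite.mem_toFinset]
    exact ⟨0, rfl⟩
  refine ⟨hrange.toFinset.attach.inf' hne (fun p => η p.1 p.2), ?_, ?_⟩
  · simp only [gt_iff_lt, Finset.lt_inf'_iff]
    exact fun p _ => hηpos p.1 p.2
  · intro i a b hab
    have hfi : f i ∈ hrange.toFinset := by
      rw [Set.Finite.mem_toFinset]; exact ⟨i, rfl⟩
    have hle : hrange.toFinset.attach.inf' hne (fun p => η p.1 p.2) ≤ η (f i) hfi :=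
      Finset.inf'_le _ (Finset.mem_attach _ ⟨f i, hfi⟩)
    exact hη (f i) hfi a b (lt_of_lt_of_le hab hle)

/-- Uniform modulus for all segments of length at most `r`. -/
lemma key_mod {X : Type*} [MetricSpace X] (f : ℕ → X → X)
    (hu : ∀ i, UniformContinuous (f i)) (hfg : FinGen f) (δ : ℝ) (hδ : 0 < δ) :
    ∀ r : ℕ, ∃ η > 0, η ≤ δ ∧ ∀ s ≤ r, ∀ m : ℕ, ∀ x y : X,
      dist (traj f m x) (traj f m y) < η →
      dist (traj f (m + s) x) (traj f (m + s) y) < δ := by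
  intro r
  induction r with
  | zero =>
    refine ⟨δ, hδ, le_refl δ, ?_⟩
    intro s hs m x y h
    obtain rfl : s = 0 := Nat.le_zero.mp hs
    simpa using h
  | succ r ih =>
    obtain ⟨η, hη, hηδ, H⟩ := ih
    obtain ⟨η', hη', H'⟩ := common_mod f hu hfg η hη
    refine ⟨min η η', lt_min hη hη', (min_le_left _ _).trans hηδ, ?_⟩
    intro s hs m x y h
    rcases Nat.le_succ_iff_eq_or_le.mp hs with hcase | hcase
    · subst hcase
      have h1 : dist (traj f (m + 1) x) (traj f (m + 1) y) < η := by
        have : dist (traj f m x) (traj f m y) < η' :=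
          lt_of_lt_of_le h (min_le_right _ _)
        exact H' m _ _ this
      have := H r le_rfl (m + 1) x y h1
      have heq : m + 1 + r = m + (r + 1) := by omega
      rwa [heq] at this
    · exact H s hcase m x y (lt_of_lt_of_le h (min_le_left _ _))

/-- If a finitely generated NADS with uniformly continuous maps is sensitive, then for
every positive integer k the k-th iterate system (whose n-th composition from the start
is `f_1^{nk}`) is also sensitive. -/
theorem stmt3 {X : Type*} [MetricSpace X] (f : ℕ → X → X)
    (hu : ∀ i, UniformContinuous (f i)) (hfg : FinGen f) (hsen : Sensitive f) :
    ∀ k : ℕ, 0 < k → ∃ δ > 0, ∀ x : X, ∀ ε > 0, ∃ y : X, ∃ n > 0,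
      dist x y < ε ∧ dist (traj f (n * k) x) (traj f (n * k) y) > δ := by
  obtain ⟨δ, hδ, hs⟩ := hsen
  intro k hk
  obtain ⟨η, hη, hηδ, H⟩ := key_mod f hu hfg δ hδ (k - 1)
  refine ⟨η / 2, by positivity, ?_⟩
  intro x ε hε
  obtain ⟨y, m, hm, hxy, hdist⟩ := hs x (min ε η) (lt_min hε hη)
  set n := m / k with hn_def
  have hmk : n * k + m % k = m := by
    rw [hn_def, mul_comm]
    exact Nat.div_add_mod m k
  have hge : η ≤ dist (traj f (n * k) x) (traj f (n * k) y) := by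
    by_contra hcon
    push_neg at hcon
    have hsk : m % k ≤ k - 1 := by
      have := Nat.mod_lt m hk
      omega
    have := H (m % k) hsk (n * k) x y hcon
    rw [hmk] at this
    linarith
  have hn : 0 < n := by
    by_contra hcon
    push_neg at hcon
    have hn0 : n = 0 := Nat.le_zero.mp hcon
    rw [hn0, zero_mul] at hge
    have : dist x y < η := lt_of_lt_of_le hxy (min_le_right _ _)
    simp only [traj] at hge
    exact absurd hge (not_le.mpr this)
  exact ⟨y, n, hn, lt_of_lt_of_le hxy (min_le_left _ _),
    lt_of_lt_of_le (by linarith) hge⟩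
end

section
/- Let (X, f_{1,∞}) be a finitely generated NADS on a compact metric space X. If f_{1,∞} has sensitive dependence on initial conditions, then for every positive integer k the k-th iterate system f_{1,∞}^{[k]} also has sensitive dependence on initial conditions. -/
lemma traj_add {X : Type*} (f : ℕ → X → X) (m : ℕ) :
    ∀ j (x : X), traj f (m + j) x = traj (fun i => f (m + i)) j (traj f m x) := by
  intro j
  induction j with
  | zero => intro x; rfl
  | succ j ih => intro x; simp [traj, Function.comp, ih]

lemma traj_congr {X : Type*} (g g' : ℕ → X → X) :
    ∀ r, (∀ i < r, g i = g' i) → traj g r = traj g' r := by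
  intro r
  induction r with
  | zero => intro _; rfl
  | succ r ih =>
    intro h
    have h1 : g r = g' r := h r (Nat.lt_succ_self r)
    have h2 : traj g r = traj g' r := ih fun i hi => h i (hi.trans (Nat.lt_succ_self r))
    simp [traj, h1, h2]

lemma traj_continuous {X : Type*} [TopologicalSpace X] (g : ℕ → X → X)
    (hg : ∀ i, Continuous (g i)) : ∀ r, Continuous (traj g r) := by
  intro r
  induction r with
  | zero => exact continuous_id
  | succ r ih => exact (hg r).comp ih

lemma equi {X : Type*} [MetricSpace X] [CompactSpace X] (δ : ℝ) (hδ : 0 < δ)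
    (S : Set (X → X)) (hS : S.Finite) :
    (∀ h ∈ S, Continuous h) →
      ∃ η > 0, ∀ h ∈ S, ∀ a b : X, dist a b < η → dist (h a) (h b) ≤ δ := by
  refine Set.Finite.induction_on (motive := fun S _ => (∀ h ∈ S, Continuous h) →
      ∃ η > 0, ∀ h ∈ S, ∀ a b : X, dist a b < η → dist (h a) (h b) ≤ δ)
    S hS (fun _ => ⟨1, one_pos, by simp⟩) ?_
  intro g s hg hs ih hcont
  obtain ⟨η, hη, hequi⟩ := ih fun h hh => hcont h (Set.mem_insert_of_mem _ hh)
  have hgc : Continuous g := hcont g (Set.mem_insert _ _)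
  have hgu : UniformContinuous g := CompactSpace.uniformContinuous_of_continuous hgc
  obtain ⟨η', hη', hg'⟩ := Metric.uniformContinuous_iff.mp hgu δ hδ
  refine ⟨min η η', lt_min hη hη', ?_⟩
  rintro h (rfl | hh) a b hab
  · exact le_of_lt (hg' (hab.trans_le (min_le_right _ _)))
  · exact hequi h hh a b (hab.trans_le (min_le_left _ _))

/-- On a compact metric space, if a finitely generated NADS of continuous maps is
sensitive, then for every positive integer k the k-th iterate system is also sensitive. -/
theorem stmt4 {X : Type*} [MetricSpace X] [CompactSpace X] (f : ℕ → X → X)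
    (hc : ∀ i, Continuous (f i)) (hfg : FinGen f) (hsen : Sensitive f) :
    ∀ k : ℕ, 0 < k → ∃ δ > 0, ∀ x : X, ∀ ε > 0, ∃ y : X, ∃ n > 0,
      dist x y < ε ∧ dist (traj f (n * k) x) (traj f (n * k) y) > δ := by
  intro k hk
  obtain ⟨δ, hδ, hsen⟩ := hsen
  obtain ⟨F, hFfin, hFmem⟩ := hfg
  set F' : Set (X → X) := F ∩ {g : X → X | Continuous g} with hF'def
  have hF'fin : F'.Finite := hFfin.subset Set.inter_subset_left
  have hF'mem : ∀ i, f i ∈ F' := fun i => ⟨hFmem i, hc i⟩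
  set S : Set (X → X) :=
    {h : X → X | ∃ r < k, ∃ w : ℕ → X → X, (∀ i, w i ∈ F') ∧ h = traj w r} with hSdef
  have : Finite ↥F' := hF'fin.to_subtype
  have hSfin : S.Finite := by
    have hsub : S ⊆ (fun p : (Fin k → ↥F') × Fin k =>
        traj (fun i => if hi : i < k then (p.1 ⟨i, hi⟩ : X → X) else id) p.2) ''
        Set.univ := by
      rintro h ⟨r, hr, w, hw, rfl⟩
      refine ⟨⟨fun j => ⟨w j.1, hw j.1⟩, ⟨r, hr⟩⟩, Set.mem_univ _, ?_⟩
      refine (traj_congr _ _ r fun i hi => ?_).symm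
      simp [dif_pos (hi.trans hr)]
    exact (Set.finite_univ.image _).subset hsub
  have hScont : ∀ h ∈ S, Continuous h := by
    rintro h ⟨r, hr, w, hw, rfl⟩
    exact traj_continuous w (fun i => (hw i).2) r
  obtain ⟨η, hη, hequi⟩ := equi δ hδ S hSfin hScont
  refine ⟨η / 2, by positivity, ?_⟩
  intro x ε hε
  obtain ⟨y, n, hn, hxy, hdist⟩ := hsen x (min ε (η / 2)) (by positivity)
  have hxyε : dist x y < ε := hxy.trans_le (min_le_left _ _)
  have hxyη : dist x y < η / 2 := hxy.trans_le (min_le_right _ _)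
  set q := n / k with hq
  set r := n % k with hr
  have hnq : k * q + r = n := Nat.div_add_mod n k
  have hrk : r < k := Nat.mod_lt _ hk
  set h : X → X := traj (fun i => f (k * q + i)) r with hhdef
  have hhS : h ∈ S := ⟨r, hrk, fun i => f (k * q + i), fun i => hF'mem _, rfl⟩
  have hkey : ∀ z : X, traj f n z = h (traj f (k * q) z) := by
    intro z; rw [← hnq, traj_add]
  have hbig : ¬ dist (traj f (k * q) x) (traj f (k * q) y) < η := by
    intro hlt
    have := hequi h hhS _ _ hlt
    rw [hkey x, hkey y] at hdist
    linarith
  have hqpos : 0 < q := by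
    by_contra hq0
    have hq0' : q = 0 := Nat.eq_zero_of_not_pos hq0
    apply hbig
    simp only [hq0', Nat.mul_zero]
    show dist (traj f 0 x) (traj f 0 y) < η
    calc dist x y < η / 2 := hxyη
      _ < η := by linarith
  refine ⟨y, q, hqpos, hxyε, ?_⟩
  rw [Nat.mul_comm q k]
  have := not_lt.mp hbig
  linarith
end

section
/- Let (X, f_{1,∞}) be a finitely generated NADS in which every map is uniformly continuous. If f_{1,∞} has collective sensitivity, then for every positive integer k, the k-th iterate system f_{1,∞}^{[k]} also has collective sensitivity. -/
/-- Collective sensitivity of the NADS `f_{1,∞}` with constant `δ`. -/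
def CollectivelySensitiveWith {X : Type*} [MetricSpace X] (f : ℕ → X → X) (δ : ℝ) : Prop :=
  ∀ n : ℕ, 0 < n → ∀ x : Fin n → X, Function.Injective x → ∀ ε > 0,
    ∃ y : Fin n → X, Function.Injective y ∧ (∀ i, dist (x i) (y i) < ε) ∧
      ∃ m > 0, ∃ i₀ : Fin n,
        (∀ i, dist (traj f m (x i)) (traj f m (y i₀)) ≥ δ) ∨
        (∀ i, dist (traj f m (y i)) (traj f m (x i₀)) ≥ δ)

/-- Collective sensitivity of the NADS `f_{1,∞}`. -/
def CollectivelySensitive {X : Type*} [MetricSpace X] (f : ℕ → X → X) : Prop :=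
  ∃ δ > 0, CollectivelySensitiveWith f δ

/-- Composition segment `f_{s+j} ∘ ⋯ ∘ f_{s+1}` (0-indexed: `f (s+j-1) ∘ ⋯ ∘ f s`). -/
def seg {X : Type*} (f : ℕ → X → X) (s : ℕ) : ℕ → X → X
  | 0 => id
  | j + 1 => f (s + j) ∘ seg f s j

lemma traj_add_s5 {X : Type*} (f : ℕ → X → X) (s j : ℕ) (a : X) :
    traj f (s + j) a = seg f s j (traj f s a) := by
  induction j with
  | zero => rfl
  | succ j ih =>
      show traj f ((s + j) + 1) a = _
      simp only [traj, seg, Function.comp_apply, ih]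

lemma traj_eq_seg {X : Type*} (f : ℕ → X → X) (j : ℕ) (a : X) :
    traj f j a = seg f 0 j a := by
  have := traj_add_s5 f 0 j a
  simpa [traj] using this

/-- Uniform equicontinuity of the maps of a finitely generated system. -/
lemma equi_s5 {X : Type*} [MetricSpace X] (f : ℕ → X → X)
    (hu : ∀ i, UniformContinuous (f i)) (hfg : FinGen f) (η : ℝ) (hη : 0 < η) :
    ∃ θ > 0, ∀ (s : ℕ) (a b : X), dist a b < θ → dist (f s a) (f s b) < η := by
  classical
  obtain ⟨F, hF, hm⟩ := hfg
  have hr : (Set.range f).Finite := hF.subset (Set.range_subset_iff.mpr hm)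
  set T := hr.toFinset with hT
  have hne : T.Nonempty := ⟨f 0, by simp [hT]⟩
  have hex : ∀ g ∈ T, ∃ θ > 0, ∀ a b : X, dist a b < θ → dist (g a) (g b) < η := by
    intro g hg
    rw [hT, Set.Finite.mem_toFinset] at hg
    obtain ⟨i, rfl⟩ := hg
    obtain ⟨θ, hθ, h⟩ := Metric.uniformContinuous_iff.mp (hu i) η hη
    exact ⟨θ, hθ, fun a b hab => h hab⟩
  let Θ : (X → X) → ℝ := fun g =>
    if h : ∃ θ > 0, ∀ a b : X, dist a b < θ → dist (g a) (g b) < η then h.choose else 1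
  have hΘpos : ∀ g ∈ T, 0 < Θ g := by
    intro g hg
    have h := hex g hg
    simp only [Θ, dif_pos h]
    exact h.choose_spec.1
  have hΘ : ∀ g ∈ T, ∀ a b : X, dist a b < Θ g → dist (g a) (g b) < η := by
    intro g hg
    have h := hex g hg
    simp only [Θ, dif_pos h]
    exact h.choose_spec.2
  refine ⟨T.inf' hne Θ, ?_, ?_⟩
  · exact (Finset.lt_inf'_iff hne).mpr hΘpos
  · intro s a b hab
    have hsT : f s ∈ T := by simp [hT]
    exact hΘ (f s) hsT a b (lt_of_lt_of_le hab (Finset.inf'_le Θ hsT))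

/-- Uniform equicontinuity of all segments of bounded length. -/
lemma seg_equi {X : Type*} [MetricSpace X] (f : ℕ → X → X)
    (hu : ∀ i, UniformContinuous (f i)) (hfg : FinGen f) (J : ℕ) (η : ℝ) (hη : 0 < η) :
    ∃ θ, 0 < θ ∧ θ ≤ η ∧ ∀ (s j : ℕ), j ≤ J → ∀ a b : X,
      dist a b < θ → dist (seg f s j a) (seg f s j b) < η := by
  induction J generalizing η with
  | zero =>
      refine ⟨η, hη, le_refl η, ?_⟩
      intro s j hj a b hab
      interval_cases j
      simpa [seg] using hab
  | succ J ih =>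
      obtain ⟨θ₁, hθ₁, hf1⟩ := equi_s5 f hu hfg η hη
      have hη' : 0 < min θ₁ η := lt_min hθ₁ hη
      obtain ⟨θ, hθ, hθle, hseg⟩ := ih (min θ₁ η) hη'
      refine ⟨θ, hθ, le_trans hθle (min_le_right _ _), ?_⟩
      intro s j hj a b hab
      rcases Nat.lt_succ_iff_lt_or_eq.mp (Nat.lt_succ_of_le hj) with h | h
      · exact lt_of_lt_of_le (hseg s j (Nat.lt_succ_iff.mp h) a b hab) (min_le_right _ _)
      · subst h
        have h1 : dist (seg f s J a) (seg f s J b) < θ₁ :=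
          lt_of_lt_of_le (hseg s J le_rfl a b hab) (min_le_left _ _)
        simpa [seg] using hf1 (s + J) _ _ h1

/-- If a finitely generated NADS with uniformly continuous maps has collective
sensitivity, then for every positive integer k, the k-th iterate system (whose n-th
composition from the start is `f_1^{nk}`) has collective sensitivity. -/
theorem stmt5 {X : Type*} [MetricSpace X] (f : ℕ → X → X)
    (hu : ∀ i, UniformContinuous (f i)) (hfg : FinGen f)
    (hcs : CollectivelySensitive f) :
    ∀ k : ℕ, 0 < k → ∃ δ > 0,
      ∀ n : ℕ, 0 < n → ∀ x : Fin n → X, Function.Injective x → ∀ ε > 0,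
        ∃ y : Fin n → X, Function.Injective y ∧ (∀ i, dist (x i) (y i) < ε) ∧
          ∃ m > 0, ∃ i₀ : Fin n,
            (∀ i, dist (traj f (m * k) (x i)) (traj f (m * k) (y i₀)) ≥ δ) ∨
            (∀ i, dist (traj f (m * k) (y i)) (traj f (m * k) (x i₀)) ≥ δ) := by
  intro k hk
  obtain ⟨δ, hδ, hCS⟩ := hcs
  obtain ⟨θ, hθ, hθδ, hseg⟩ := seg_equi f hu hfg k δ hδ
  refine ⟨θ, hθ, ?_⟩
  intro n hn x hx ε hε
  have hε' : 0 < min ε θ := lt_min hε hθ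
  obtain ⟨y, hyinj, hyd, m, hm, i₀, hsep⟩ := hCS n hn x hx (min ε θ) hε'
  have hxy : ∀ i, dist (x i) (y i) < ε := fun i => lt_of_lt_of_le (hyd i) (min_le_left _ _)
  have hxyθ : dist (x i₀) (y i₀) < θ := lt_of_lt_of_le (hyd i₀) (min_le_right _ _)
  -- m ≥ k
  have hmk : k ≤ m := by
    by_contra h
    push_neg at h
    have h1 : dist (traj f m (x i₀)) (traj f m (y i₀)) < δ := by
      rw [traj_eq_seg, traj_eq_seg]
      exact hseg 0 m (le_of_lt h) _ _ hxyθ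
    rcases hsep with h2 | h2
    · exact absurd (h2 i₀) (not_le.mpr h1)
    · rw [dist_comm] at h1
      exact absurd (h2 i₀) (not_le.mpr h1)
  set q := m / k with hqdef
  set r := m % k with hrdef
  have hq : 0 < q := Nat.div_pos hmk hk
  have hqk : q * k + r = m := by
    rw [hqdef, hrdef, Nat.mul_comm]
    exact Nat.div_add_mod m k
  have hrk : r ≤ k := le_of_lt (Nat.mod_lt m hk)
  have key : ∀ a : X, traj f m a = seg f (q * k) r (traj f (q * k) a) := by
    intro a
    rw [← hqk]
    exact traj_add_s5 f (q * k) r a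
  refine ⟨y, hyinj, hxy, q, hq, i₀, ?_⟩
  rcases hsep with h2 | h2
  · left
    intro i
    by_contra hcon
    push_neg at hcon
    have := hseg (q * k) r hrk _ _ hcon
    rw [← key, ← key] at this
    exact absurd (h2 i) (not_le.mpr this)
  · right
    intro i
    by_contra hcon
    push_neg at hcon
    have := hseg (q * k) r hrk _ _ hcon
    rw [← key, ← key] at this
    exact absurd (h2 i) (not_le.mpr this)
end

section
/- Let X be a metric space without isolated points and (X, f_{1,∞}) a finitely generated NADS that is topologically transitive, has dense periodic points, and has two invariant periodic points with disjoint orbits. Then (X, f_{1,∞}) is Devaney chaotic, i.e., it is topologically transitive, has dense periodic points, and has sensitive dependence on initial conditions. -/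
/-- Topological transitivity of the NADS `f_{1,∞}`. -/
def Transitive' {X : Type*} [MetricSpace X] (f : ℕ → X → X) : Prop :=
  ∀ U V : Set X, IsOpen U → IsOpen V → U.Nonempty → V.Nonempty →
    ∃ N > 0, (traj f N '' U ∩ V).Nonempty

/-- `x` is a periodic point of the NADS `f_{1,∞}`. -/
def IsPeriodicPt' {X : Type*} (f : ℕ → X → X) (x : X) : Prop :=
  ∃ N > 0, ∀ k : ℕ, traj f k x = traj f (N + k) x

/-- The orbit of `x` under the NADS `f_{1,∞}`. -/
def orbit' {X : Type*} (f : ℕ → X → X) (x : X) : Set X :=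
  Set.range fun n => traj f n x

/-- `x` is an invariant periodic point: a periodic point whose orbit is invariant. -/
def IsInvPeriodicPt {X : Type*} (f : ℕ → X → X) (x : X) : Prop :=
  IsPeriodicPt' f x ∧ ∀ i : ℕ, Set.MapsTo (f i) (orbit' f x) (orbit' f x)

namespace Stmt10Aux

open Metric Set

variable {X : Type*}

/-- `seg f N j = f_{N+j} ∘ ⋯ ∘ f_{N+1}`: the composition of `j` maps starting at index `N`. -/
def seg (f : ℕ → X → X) (N : ℕ) : ℕ → X → X
  | 0 => id
  | j + 1 => f (N + j) ∘ seg f N j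

lemma traj_succ (f : ℕ → X → X) (n : ℕ) (x : X) : traj f (n + 1) x = f n (traj f n x) := rfl

lemma traj_add (f : ℕ → X → X) (N : ℕ) :
    ∀ (j : ℕ) (x : X), traj f (N + j) x = seg f N j (traj f N x)
  | 0, x => rfl
  | j + 1, x => by
    have h : N + (j + 1) = (N + j) + 1 := rfl
    rw [h, traj_succ, traj_add f N j x]
    rfl

lemma seg_continuous [TopologicalSpace X] (f : ℕ → X → X) (hc : ∀ i, Continuous (f i))
    (N : ℕ) : ∀ j, Continuous (seg f N j)
  | 0 => continuous_id
  | j + 1 => (hc (N + j)).comp (seg_continuous f hc N j)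

lemma seg_mapsTo (f : ℕ → X → X) {A : Set X} (h : ∀ i, Set.MapsTo (f i) A A) (N : ℕ) :
    ∀ j, Set.MapsTo (seg f N j) A A
  | 0 => fun _ hx => hx
  | j + 1 => fun _ hx => h (N + j) (seg_mapsTo f h N j hx)

lemma seg_range_finite (f : ℕ → X → X) (hfg : FinGen f) (M : ℕ) :
    {g : X → X | ∃ N, ∃ j ≤ M, g = seg f N j}.Finite := by
  have hS : (Set.range f).Finite := by
    obtain ⟨F, hF, hmem⟩ := hfg
    exact hF.subset (Set.range_subset_iff.mpr hmem)
  have key : ∀ j, (Set.range fun N => seg f N j).Finite := by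
    intro j
    induction j with
    | zero =>
      refine (Set.finite_singleton (id : X → X)).subset ?_
      rintro _ ⟨N, rfl⟩; rfl
    | succ j ih =>
      refine (hS.image2 (· ∘ ·) ih).subset ?_
      rintro _ ⟨N, rfl⟩
      exact ⟨f (N + j), ⟨N + j, rfl⟩, seg f N j, ⟨N, rfl⟩, rfl⟩
  have hsub : {g : X → X | ∃ N, ∃ j ≤ M, g = seg f N j} ⊆
      ⋃ j ∈ Set.Iic M, Set.range fun N => seg f N j := by
    rintro g ⟨N, j, hj, rfl⟩
    exact Set.mem_biUnion hj ⟨N, rfl⟩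
  exact ((Set.finite_Iic M).biUnion fun j _ => key j).subset hsub

lemma traj_mul_add (f : ℕ → X → X) {x : X} {M : ℕ}
    (h : ∀ k, traj f k x = traj f (M + k) x) :
    ∀ j k, traj f (j * M + k) x = traj f k x := by
  intro j
  induction j with
  | zero => simp
  | succ j ih =>
    intro k
    have he : (j + 1) * M + k = M + (j * M + k) := by ring
    rw [he, ← h (j * M + k), ih]

lemma orbit_finite (f : ℕ → X → X) {x : X} (h : IsPeriodicPt' f x) : (orbit' f x).Finite := by
  obtain ⟨M, hM, hper⟩ := h
  have hsub : orbit' f x ⊆ (fun k => traj f k x) '' Set.Iio M := by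
    rintro _ ⟨n, rfl⟩
    refine ⟨n % M, Nat.mod_lt _ hM, ?_⟩
    have he : n / M * M + n % M = n := Nat.div_add_mod' n M
    show traj f (n % M) x = traj f n x
    conv_rhs => rw [← he]
    exact (traj_mul_add f hper (n / M) (n % M)).symm
  exact ((Set.finite_Iio M).image _).subset hsub

lemma exists_sep [MetricSpace X] {A B : Set X} (hA : A.Finite) (hAne : A.Nonempty)
    (hB : B.Finite) (hBne : B.Nonempty) (hdisj : A ∩ B = ∅) :
    ∃ d > 0, ∀ a ∈ A, ∀ b ∈ B, d ≤ dist a b := by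
  obtain ⟨a0, ha0, hmin⟩ := hA.isCompact.exists_isMinOn hAne
    (continuous_infDist_pt B).continuousOn
  refine ⟨infDist a0 B, ?_, fun a ha b hb => le_trans (hmin ha) (infDist_le_dist_of_mem hb)⟩
  refine (hB.isClosed.notMem_iff_infDist_pos hBne).mp ?_
  intro hmem
  exact absurd (Set.mem_inter ha0 hmem) (by rw [hdisj]; exact Set.notMem_empty a0)

end Stmt10Aux

/-- Under the hypotheses of the Banks-type theorem, the NADS is Devaney chaotic:
transitive, with dense periodic points, and sensitive. -/
theorem stmt10 {X : Type*} [MetricSpace X] (f : ℕ → X → X)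
    (hc : ∀ i, Continuous (f i)) (hfg : FinGen f)
    (hiso : ∀ x : X, Filter.NeBot (nhdsWithin x {x}ᶜ))
    (htrans : Transitive' f)
    (hdense : Dense {x : X | IsPeriodicPt' f x})
    (hinv : ∃ x y : X, IsInvPeriodicPt f x ∧ IsInvPeriodicPt f y ∧
      orbit' f x ∩ orbit' f y = ∅) :
    Transitive' f ∧ Dense {x : X | IsPeriodicPt' f x} ∧ Sensitive f := by
  classical
  open Metric Set Stmt10Aux in
  refine ⟨htrans, hdense, ?_⟩
  obtain ⟨p, q, ⟨hp, hpi⟩, ⟨hq, hqi⟩, hdisj⟩ := hinv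
  have hpA : p ∈ orbit' f p := ⟨0, rfl⟩
  have hqB : q ∈ orbit' f q := ⟨0, rfl⟩
  obtain ⟨d0, hd0, hsep⟩ := Stmt10Aux.exists_sep (Stmt10Aux.orbit_finite f hp) ⟨p, hpA⟩
    (Stmt10Aux.orbit_finite f hq) ⟨q, hqB⟩ hdisj
  set δ := d0 / 8 with hδdef
  have hδpos : 0 < δ := by positivity
  refine ⟨δ, hδpos, ?_⟩
  intro x ε hε
  set ε' := min ε δ with hε'def
  have hε'pos : 0 < ε' := lt_min hε hδpos
  -- one of the two orbits is 4δ-far from x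
  have hfar : (∀ a ∈ orbit' f p, 4 * δ ≤ dist x a) ∨ (∀ b ∈ orbit' f q, 4 * δ ≤ dist x b) := by
    by_contra h
    push_neg at h
    obtain ⟨⟨a, ha, ha'⟩, b, hb, hb'⟩ := h
    have h1 := hsep a ha b hb
    have h2 : dist a b ≤ dist a x + dist x b := dist_triangle a x b
    rw [dist_comm a x] at h2
    have : d0 = 8 * δ := by rw [hδdef]; ring
    linarith
  obtain ⟨c, hcinv, hcfar⟩ : ∃ c : X,
      (∀ i, Set.MapsTo (f i) (orbit' f c) (orbit' f c)) ∧ ∀ a ∈ orbit' f c, 4 * δ ≤ dist x a := by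
    rcases hfar with h | h
    exacts [⟨p, hpi, h⟩, ⟨q, hqi, h⟩]
  -- a periodic point near x
  obtain ⟨z, hzper, hzx⟩ := hdense.exists_dist_lt x hε'pos
  obtain ⟨M, hM, hper⟩ := hzper
  -- the open set V
  set T : Set (X → X) := {g | ∃ N, ∃ j ≤ M, g = Stmt10Aux.seg f N j} with hTdef
  have hT : T.Finite := Stmt10Aux.seg_range_finite f hfg M
  set V : Set X := ⋂ g ∈ T, g ⁻¹' (⋃ a ∈ orbit' f c, Metric.ball a δ) with hVdef
  have hVopen : IsOpen V := by
    refine hT.isOpen_biInter fun g hg => ?_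
    obtain ⟨N, j, hj, rfl⟩ := hg
    exact (isOpen_biUnion fun a _ => Metric.isOpen_ball).preimage
      (Stmt10Aux.seg_continuous f hc N j)
  have hVne : V.Nonempty := by
    refine ⟨c, ?_⟩
    rw [hVdef]
    simp only [Set.mem_iInter]
    rintro g hg
    obtain ⟨N, j, hj, rfl⟩ := hg
    have hmem : Stmt10Aux.seg f N j c ∈ orbit' f c :=
      Stmt10Aux.seg_mapsTo f hcinv N j ⟨0, rfl⟩
    exact Set.mem_biUnion hmem (Metric.mem_ball_self hδpos)
  obtain ⟨N, hN, w, hw1, hw2⟩ := htrans (Metric.ball x ε') V Metric.isOpen_ball hVopen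
    ⟨x, Metric.mem_ball_self hε'pos⟩ hVne
  obtain ⟨y, hyU, rfl⟩ := hw1
  -- choose n: multiple of M with N < n ≤ N + M
  set n := (N / M + 1) * M with hndef
  have hnpos : 0 < n := Nat.mul_pos (Nat.succ_pos _) hM
  have hNn : N < n := by
    calc N = M * (N / M) + N % M := (Nat.div_add_mod N M).symm
      _ < M * (N / M) + M := by have := Nat.mod_lt N hM; omega
      _ = n := by rw [hndef]; ring
  have hnle : n ≤ N + M := by
    have h1 : N / M * M ≤ N := Nat.div_mul_le_self N M
    have h2 : n = N / M * M + M := by rw [hndef]; ring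
    omega
  have hjle : n - N ≤ M := by omega
  have hnsplit : n = N + (n - N) := by omega
  -- traj f n z = z
  have hzn : traj f n z = z := by
    have : traj f ((N / M + 1) * M + 0) z = traj f 0 z :=
      Stmt10Aux.traj_mul_add f hper (N / M + 1) 0
    exact this
  -- traj f n y is δ-close to the orbit of c
  have hyn : traj f n y = Stmt10Aux.seg f N (n - N) (traj f N y) := by
    conv_lhs => rw [hnsplit]
    exact Stmt10Aux.traj_add f N (n - N) y
  have hynA : ∃ a ∈ orbit' f c, dist (traj f n y) a < δ := by
    have hsegT : Stmt10Aux.seg f N (n - N) ∈ T := ⟨N, n - N, hjle, rfl⟩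
    rw [hVdef] at hw2
    simp only [Set.mem_iInter] at hw2
    have := hw2 _ hsegT
    rw [Set.mem_preimage] at this
    obtain ⟨a, ha, hball⟩ := Set.mem_iUnion₂.mp this
    exact ⟨a, ha, by rw [hyn]; exact Metric.mem_ball.mp hball⟩
  obtain ⟨a, haA, hay⟩ := hynA
  have hxa : 4 * δ ≤ dist x a := hcfar a haA
  have hxz : dist x z < δ := lt_of_lt_of_le hzx (min_le_right _ _)
  have hzy : dist (traj f n z) (traj f n y) > 2 * δ := by
    have h1 : dist x a ≤ dist x (traj f n z) + dist (traj f n z) (traj f n y) +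
        dist (traj f n y) a := dist_triangle4 x (traj f n z) (traj f n y) a
    rw [hzn] at h1 ⊢
    linarith
  have hxy : dist x y < ε := lt_of_lt_of_le (by rw [dist_comm]; exact Metric.mem_ball.mp hyU)
    (min_le_left _ _)
  have hxz' : dist x z < ε := lt_of_lt_of_le hzx (min_le_left _ _)
  rcases le_or_gt (dist (traj f n x) (traj f n z)) δ with h | h
  · refine ⟨y, n, hnpos, hxy, ?_⟩
    have h1 : dist (traj f n z) (traj f n y) ≤ dist (traj f n z) (traj f n x) +
        dist (traj f n x) (traj f n y) := dist_triangle _ _ _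
    rw [dist_comm (traj f n z) (traj f n x)] at h1
    linarith
  · exact ⟨z, n, hnpos, hxz', h⟩
end

section
/- Let (X, d, f_{1,∞}) be a linear NADS (X a separable Fréchet space with translation-invariant metric d, each f_n a continuous linear self-map). If f_{1,∞} is topologically transitive, then it has sensitive dependence on initial conditions. -/
theorem traj_add_s11 {X : Type*} [AddCommGroup X] [Module ℝ X]
    (f : ℕ → X → X) (hlin : ∀ n, IsLinearMap ℝ (f n)) (n : ℕ) (x u : X) :
    traj f n (x + u) = traj f n x + traj f n u := by
  induction n with
  | zero => simp [traj]
  | succ n ih => simp [traj, ih, (hlin n).map_add]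

/-- A transitive linear NADS (on a separable Fréchet space with translation-invariant
metric, with at least two points) has sensitive dependence on initial conditions. -/
theorem stmt11 {X : Type*} [AddCommGroup X] [Module ℝ X] [MetricSpace X]
    [IsTopologicalAddGroup X] [ContinuousSMul ℝ X] [CompleteSpace X]
    [TopologicalSpace.SeparableSpace X] [Nontrivial X]
    (htransinv : ∀ x y z : X, dist (x + z) (y + z) = dist x y)
    (f : ℕ → X → X) (hc : ∀ n, Continuous (f n)) (hlin : ∀ n, IsLinearMap ℝ (f n))
    (htrans : ∀ U V : Set X, IsOpen U → IsOpen V → U.Nonempty → V.Nonempty →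
      ∃ N > 0, (traj f N '' U ∩ V).Nonempty) :
    ∃ δ > 0, ∀ x : X, ∀ ε > 0, ∃ y : X, ∃ n > 0,
      dist x y < ε ∧ dist (traj f n x) (traj f n y) > δ := by
  obtain ⟨a, b, hab⟩ := exists_pair_ne X
  set w : X := a - b with hw
  have hw0 : w ≠ 0 := sub_ne_zero.mpr hab
  set D : ℝ := dist w 0 with hD
  have hDpos : 0 < D := dist_pos.mpr hw0
  refine ⟨D / 2, by linarith, fun x ε hε => ?_⟩
  obtain ⟨N, hN, z, ⟨u, hu, hz⟩, hzV⟩ := htrans (Metric.ball 0 ε) (Metric.ball w (D / 4))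
    Metric.isOpen_ball Metric.isOpen_ball ⟨0, by simpa using hε⟩
    ⟨w, by simp [Metric.mem_ball]; linarith⟩
  have key : ∀ p q : X, dist p (p + q) = dist 0 q := fun p q => by
    have h := htransinv 0 q p
    rwa [zero_add, add_comm q p] at h
  refine ⟨x + u, N, hN, ?_, ?_⟩
  · rw [key, dist_comm]
    simpa using hu
  · rw [traj_add_s11 f hlin, key]
    rw [hz]
    have h1 : dist z w < D / 4 := hzV
    have h2 : D ≤ dist w z + dist z 0 := dist_triangle w z 0
    rw [dist_comm] at h1
    have : dist 0 z > D / 2 := by rw [dist_comm]; linarith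
    simpa using this
end

section
/- Let (X, d, f_{1,∞}) be a commutative linear NADS that is topologically transitive. Then there exists η>0 such that for every ε>0 there exist points z_1, z_2 with d(z_1, 0) < ε, d(z_2, 0) < ε and a positive integer k with d(f_1^k(z_1), f_1^k(z_2)) > η. -/
lemma traj_zero {X : Type*} [AddCommGroup X] [Module ℝ X] (f : ℕ → X → X)
    (hlin : ∀ n, IsLinearMap ℝ (f n)) : ∀ k, traj f k (0 : X) = 0
  | 0 => rfl
  | k + 1 => by
    show f k (traj f k 0) = 0
    rw [traj_zero f hlin k, (hlin k).map_zero]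

/-- For a commutative, transitive linear NADS there is η>0 such that for every ε>0
there are points z₁, z₂ within ε of 0 and a positive integer k with
d(f_1^k(z₁), f_1^k(z₂)) > η. -/
theorem stmt12 {X : Type*} [AddCommGroup X] [Module ℝ X] [MetricSpace X]
    [IsTopologicalAddGroup X] [ContinuousSMul ℝ X] [CompleteSpace X]
    [TopologicalSpace.SeparableSpace X] [Nontrivial X]
    (htransinv : ∀ x y z : X, dist (x + z) (y + z) = dist x y)
    (f : ℕ → X → X) (hc : ∀ n, Continuous (f n)) (hlin : ∀ n, IsLinearMap ℝ (f n))
    (hcomm : ∀ m n : ℕ, 0 < m → 0 < n → ∀ x : X,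
      traj f n (traj f m x) = traj f m (traj f n x))
    (htrans : ∀ U V : Set X, IsOpen U → IsOpen V → U.Nonempty → V.Nonempty →
      ∃ N > 0, (traj f N '' U ∩ V).Nonempty) :
    ∃ η > 0, ∀ ε > 0, ∃ z₁ z₂ : X, ∃ k > 0,
      dist z₁ 0 < ε ∧ dist z₂ 0 < ε ∧ dist (traj f k z₁) (traj f k z₂) > η := by
  obtain ⟨a, b, hab⟩ := exists_pair_ne X
  set y := a - b with hy
  have hy0 : y ≠ 0 := sub_ne_zero.mpr hab
  have hd : 0 < dist y 0 := dist_pos.mpr hy0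
  refine ⟨dist y 0 / 2, by linarith, fun ε hε => ?_⟩
  obtain ⟨N, hN, v, ⟨w, hw, hwv⟩, hv⟩ :=
    htrans (Metric.ball 0 ε) (Metric.ball y (dist y 0 / 2))
      Metric.isOpen_ball Metric.isOpen_ball
      ⟨0, Metric.mem_ball_self hε⟩ ⟨y, Metric.mem_ball_self (by linarith)⟩
  refine ⟨w, 0, N, hN, Metric.mem_ball.mp hw, by simpa using hε, ?_⟩
  rw [traj_zero f hlin N, hwv]
  have := Metric.mem_ball.mp hv
  have h2 := dist_triangle y v 0
  rw [dist_comm y v] at h2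
  linarith
end

section
/- Let (X, d, f_{1,∞}) be a commutative linear NADS that is topologically transitive. Then it has collective sensitivity: there exists δ>0 such that for any finitely many distinct points x_1,...,x_n ∈ X and any ε>0 there exist distinct points y_1,...,y_n with d(x_i, y_i)<ε for all i, a positive integer k, and an index i_0 such that either d(f_1^k(x_i), f_1^k(y_{i_0})) ≥ δ for all i, or d(f_1^k(y_i), f_1^k(x_{i_0})) ≥ δ for all i. -/
lemma traj_linear {X : Type*} [AddCommGroup X] [Module ℝ X]
    (f : ℕ → X → X) (hlin : ∀ n, IsLinearMap ℝ (f n)) (k : ℕ) :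
    IsLinearMap ℝ (traj f k) := by
  induction k with
  | zero => exact ⟨fun x y => rfl, fun c x => rfl⟩
  | succ k ih =>
      constructor
      · intro x y
        show f k (traj f k (x + y)) = f k (traj f k x) + f k (traj f k y)
        rw [ih.map_add, (hlin k).map_add]
      · intro c x
        show f k (traj f k (c • x)) = c • f k (traj f k x)
        rw [ih.map_smul, (hlin k).map_smul]

lemma dist_nat_smul_le {X : Type*} [AddCommGroup X] [Module ℝ X] [MetricSpace X]
    (htransinv : ∀ x y z : X, dist (x + z) (y + z) = dist x y)
    (z : X) : ∀ j : ℕ, dist ((j : ℝ) • z) 0 ≤ j * dist z 0 := by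
  intro j
  induction j with
  | zero => simp
  | succ j ih =>
      have h1 : ((j + 1 : ℕ) : ℝ) • z = (j : ℝ) • z + z := by
        push_cast; rw [add_smul, one_smul]
      have h2 : dist ((j : ℝ) • z + z) (0 + z) = dist ((j : ℝ) • z) 0 := htransinv _ _ _
      calc dist (((j + 1 : ℕ) : ℝ) • z) 0
          ≤ dist (((j + 1 : ℕ) : ℝ) • z) (0 + z) + dist (0 + z) 0 := dist_triangle _ _ _
        _ = dist ((j : ℝ) • z) 0 + dist z 0 := by rw [h1, h2, zero_add]
        _ ≤ j * dist z 0 + dist z 0 := add_le_add_left ih _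
        _ = ((j + 1 : ℕ) : ℝ) * dist z 0 := by push_cast; ring

/-- A commutative, transitive linear NADS has collective sensitivity. -/
theorem stmt13 {X : Type*} [AddCommGroup X] [Module ℝ X] [MetricSpace X]
    [IsTopologicalAddGroup X] [ContinuousSMul ℝ X] [CompleteSpace X]
    [TopologicalSpace.SeparableSpace X] [Nontrivial X]
    (htransinv : ∀ x y z : X, dist (x + z) (y + z) = dist x y)
    (f : ℕ → X → X) (hc : ∀ n, Continuous (f n)) (hlin : ∀ n, IsLinearMap ℝ (f n))
    (hcomm : ∀ m n : ℕ, 0 < m → 0 < n → ∀ x : X,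
      traj f n (traj f m x) = traj f m (traj f n x))
    (htrans : ∀ U V : Set X, IsOpen U → IsOpen V → U.Nonempty → V.Nonempty →
      ∃ N > 0, (traj f N '' U ∩ V).Nonempty) :
    ∃ δ > 0, ∀ n : ℕ, 0 < n → ∀ x : Fin n → X, Function.Injective x → ∀ ε > 0,
      ∃ y : Fin n → X, Function.Injective y ∧ (∀ i, dist (x i) (y i) < ε) ∧
        ∃ k > 0, ∃ i₀ : Fin n,
          (∀ i, dist (traj f k (x i)) (traj f k (y i₀)) ≥ δ) ∨
          (∀ i, dist (traj f k (y i)) (traj f k (x i₀)) ≥ δ) := by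
  classical
  obtain ⟨x₀, hx₀⟩ := exists_ne (0 : X)
  have hcpos : 0 < dist x₀ 0 := dist_pos.mpr hx₀
  -- continuity of smul at (0,0)
  have hca : ContinuousAt (fun p : ℝ × X => p.1 • p.2) ((0 : ℝ), (0 : X)) :=
    continuous_smul.continuousAt
  obtain ⟨α, hα, hball⟩ := Metric.continuousAt_iff.mp hca _ hcpos
  set M : ℕ := ⌈α⁻¹⌉₊ + 2 with hM
  have hM2 : 2 ≤ M := by omega
  -- far multiples for m ≥ M
  have hfar : ∀ m : ℕ, M ≤ m → α ≤ dist ((m : ℝ) • x₀) 0 := by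
    intro m hm
    by_contra h
    push_neg at h
    have hmpos : 0 < (m : ℝ) := by
      have : 0 < m := lt_of_lt_of_le (by omega) hm
      exact_mod_cast this
    have hinv : (m : ℝ)⁻¹ < α := by
      have h1 : α⁻¹ < (m : ℝ) := by
        calc α⁻¹ ≤ (⌈α⁻¹⌉₊ : ℝ) := Nat.le_ceil _
          _ < (M : ℝ) := by exact_mod_cast (by omega : ⌈α⁻¹⌉₊ < M)
          _ ≤ (m : ℝ) := by exact_mod_cast hm
      calc (m : ℝ)⁻¹ < (α⁻¹)⁻¹ := by
            apply inv_strictAnti₀ (by positivity) h1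
        _ = α := inv_inv α
    have hp : dist (((m : ℝ)⁻¹, (m : ℝ) • x₀) : ℝ × X) ((0 : ℝ), (0 : X)) < α := by
      rw [Prod.dist_eq]
      apply max_lt
      · rw [Real.dist_eq, sub_zero, abs_of_pos (by positivity)]
        exact hinv
      · exact h
    have := hball hp
    simp only [smul_zero] at this
    have heq : (m : ℝ)⁻¹ • ((m : ℝ) • x₀) = x₀ := by
      rw [smul_smul, inv_mul_cancel₀ (ne_of_gt hmpos), one_smul]
    rw [heq] at this
    exact absurd this (lt_irrefl _)
  -- positive min over small multiples
  have hIcone : (Finset.Ico 1 M).Nonempty := ⟨1, by simp; omega⟩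
  set rsmall : ℝ := (Finset.Ico 1 M).inf' hIcone (fun m => dist ((m : ℝ) • x₀) 0) with hrs
  have hrspos : 0 < rsmall := by
    rw [hrs, Finset.lt_inf'_iff]
    intro m hm
    simp only [Finset.mem_Ico] at hm
    have hm0 : (m : ℝ) ≠ 0 := Nat.cast_ne_zero.mpr (by omega)
    exact dist_pos.mpr (smul_ne_zero hm0 hx₀)
  set r : ℝ := min α rsmall with hr
  have hrpos : 0 < r := lt_min hα hrspos
  have hrall : ∀ m : ℕ, 1 ≤ m → r ≤ dist ((m : ℝ) • x₀) 0 := by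
    intro m hm
    rcases lt_or_ge m M with hlt | hge
    · calc r ≤ rsmall := min_le_right _ _
        _ ≤ dist ((m : ℝ) • x₀) 0 :=
          Finset.inf'_le _ (by simp [Finset.mem_Ico]; omega)
    · calc r ≤ α := min_le_left _ _
        _ ≤ dist ((m : ℝ) • x₀) 0 := hfar m hge
  refine ⟨r / 3, by positivity, ?_⟩
  set δ : ℝ := r / 3 with hδ
  intro n hn x hinj ε hε
  -- the open target set
  set V : Set X := {v : X | ∀ m ∈ Finset.Icc 1 n, 2 * δ < dist ((m : ℝ) • v) 0} with hV
  have hVopen : IsOpen V := by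
    have : V = ⋂ m ∈ Finset.Icc 1 n, {v : X | 2 * δ < dist ((m : ℝ) • v) 0} := by
      ext v; simp [hV]
    rw [this]
    apply isOpen_biInter_finset
    intro m _
    exact isOpen_lt continuous_const ((continuous_id.const_smul ((m : ℕ) : ℝ)).dist continuous_const)
  have hVne : x₀ ∈ V := by
    intro m hm
    simp only [Finset.mem_Icc] at hm
    calc 2 * δ < r := by rw [hδ]; linarith
      _ ≤ dist ((m : ℝ) • x₀) 0 := hrall m hm.1
  have hUne : (Metric.ball (0 : X) (ε / (n + 2))).Nonempty :=
    ⟨0, Metric.mem_ball_self (by positivity)⟩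
  obtain ⟨N, hN, q, hq⟩ := htrans (Metric.ball 0 (ε / (n + 2))) V Metric.isOpen_ball hVopen hUne ⟨x₀, hVne⟩
  obtain ⟨⟨z, hzU, hzq⟩, hqV⟩ := hq
  have hzd : dist z 0 < ε / (n + 2) := Metric.mem_ball.mp hzU
  set b : X := traj f N z with hb
  have hbq : b = q := hzq
  have hbV : ∀ m ∈ Finset.Icc 1 n, 2 * δ < dist ((m : ℝ) • b) 0 := by
    rw [hbq]; exact hqV
  have hT := traj_linear f hlin N
  set i₀ : Fin n := ⟨0, hn⟩ with hi₀
  -- pigeonhole: find a good multiple j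
  have key : ∃ j ∈ Finset.Icc 1 (n + 1),
      ∀ i : Fin n, δ ≤ dist (traj f N (x i + (j : ℝ) • z)) (traj f N (x i₀)) := by
    by_contra hcon
    push_neg at hcon
    choose w hw using hcon
    set g : ℕ → Fin n := fun j =>
      if h : j ∈ Finset.Icc 1 (n + 1) then w j h else i₀ with hg
    have hcard : (Finset.univ : Finset (Fin n)).card < (Finset.Icc 1 (n + 1)).card := by
      simp [Nat.card_Icc]
    obtain ⟨j, hj, l, hl, hne, heq⟩ :=
      Finset.exists_ne_map_eq_of_card_lt_of_maps_to hcard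
        (fun j (hj : j ∈ Finset.Icc 1 (n + 1)) => Finset.mem_univ (g j))
    -- symmetric contradiction machine
    have main : ∀ j l : ℕ, j ∈ Finset.Icc 1 (n + 1) → l ∈ Finset.Icc 1 (n + 1) →
        l < j → g j = g l → False := by
      intro j l hj hl hlt heq
      have hij : g j = w j hj := by rw [hg]; exact dif_pos hj
      have hil : g l = w l hl := by rw [hg]; exact dif_pos hl
      have hww : w l hl = w j hj := by rw [← hil, ← heq, hij]
      have hwj := hw j hj
      have hwl := hw l hl
      rw [hww] at hwl
      set i : Fin n := w j hj with hi
      have hTj : ∀ c : ℝ, traj f N (x i + c • z) = c • b + traj f N (x i) := by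
        intro c
        rw [hT.map_add, hT.map_smul, add_comm]
      rw [hTj] at hwj hwl
      have htri : dist ((j : ℝ) • b + traj f N (x i)) ((l : ℝ) • b + traj f N (x i)) < 2 * δ := by
        calc dist ((j : ℝ) • b + traj f N (x i)) ((l : ℝ) • b + traj f N (x i))
            ≤ dist ((j : ℝ) • b + traj f N (x i)) (traj f N (x i₀)) +
              dist (traj f N (x i₀)) ((l : ℝ) • b + traj f N (x i)) := dist_triangle _ _ _
          _ < δ + δ := by
              apply add_lt_add hwj
              rw [dist_comm]; exact hwl
          _ = 2 * δ := by ring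
      rw [htransinv] at htri
      set m : ℕ := j - l with hm
      have hm1 : 1 ≤ m := by omega
      have hm2 : m ≤ n := by
        simp only [Finset.mem_Icc] at hj hl
        omega
      have hcast : ((m : ℕ) : ℝ) + (l : ℝ) = (j : ℝ) := by
        have : m + l = j := by omega
        exact_mod_cast congrArg (fun t : ℕ => (t : ℝ)) this
      have hdist : dist ((j : ℝ) • b) ((l : ℝ) • b) = dist ((m : ℝ) • b) 0 := by
        have h0 := htransinv ((m : ℝ) • b) 0 ((l : ℝ) • b)
        rw [zero_add] at h0
        rw [← h0]
        congr 1
        rw [← add_smul, hcast]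
      rw [hdist] at htri
      have := hbV m (Finset.mem_Icc.mpr ⟨hm1, hm2⟩)
      linarith
    rcases hne.lt_or_gt with hlt | hlt
    · exact main l j hl hj hlt heq.symm
    · exact main j l hj hl hlt heq
  obtain ⟨j, hjmem, hjgood⟩ := key
  simp only [Finset.mem_Icc] at hjmem
  refine ⟨fun i => x i + (j : ℝ) • z, ?_, ?_, N, hN, i₀, Or.inr ?_⟩
  · intro i i' h
    exact hinj (add_right_cancel h)
  · intro i
    have h1 : dist (x i) (x i + (j : ℝ) • z) = dist 0 ((j : ℝ) • z) := by
      have h2 := htransinv 0 ((j : ℝ) • z) (x i)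
      rw [zero_add] at h2
      rw [← h2, add_comm ((j : ℝ) • z) (x i)]
    rw [h1, dist_comm]
    calc dist ((j : ℝ) • z) 0 ≤ j * dist z 0 := dist_nat_smul_le htransinv z j
      _ ≤ (n + 1) * dist z 0 := by
          apply mul_le_mul_of_nonneg_right _ dist_nonneg
          exact_mod_cast hjmem.2
      _ < (n + 1) * (ε / (n + 2)) := by
          apply mul_lt_mul_of_pos_left hzd (by positivity)
      _ < (n + 2) * (ε / (n + 2)) := by
          apply mul_lt_mul_of_pos_right _ (by positivity)
          linarith
      _ = ε := by field_simp
  · intro i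
    exact hjgood i
end

section
/- Let (X, d, f_{1,∞}) be a commutative linear NADS that is topologically transitive. Then it has synchronous sensitivity: there exists δ>0 such that for any finitely many distinct points x_1,...,x_n ∈ X and any ε>0 there exist points y_1,...,y_n with d(x_i, y_i)<ε for all i, and a positive integer k with d(f_1^k(x_i), f_1^k(y_i)) ≥ δ for every i = 1,...,n. -/
/-- A commutative, transitive linear NADS has synchronous sensitivity. -/
theorem stmt14 {X : Type*} [AddCommGroup X] [Module ℝ X] [MetricSpace X]
    [IsTopologicalAddGroup X] [ContinuousSMul ℝ X] [CompleteSpace X]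
    [TopologicalSpace.SeparableSpace X] [Nontrivial X]
    (htransinv : ∀ x y z : X, dist (x + z) (y + z) = dist x y)
    (f : ℕ → X → X) (hc : ∀ n, Continuous (f n)) (hlin : ∀ n, IsLinearMap ℝ (f n))
    (hcomm : ∀ m n : ℕ, 0 < m → 0 < n → ∀ x : X,
      traj f n (traj f m x) = traj f m (traj f n x))
    (htrans : ∀ U V : Set X, IsOpen U → IsOpen V → U.Nonempty → V.Nonempty →
      ∃ N > 0, (traj f N '' U ∩ V).Nonempty) :
    ∃ δ > 0, ∀ n : ℕ, 0 < n → ∀ x : Fin n → X, Function.Injective x → ∀ ε > 0,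
      ∃ y : Fin n → X, (∀ i, dist (x i) (y i) < ε) ∧
        ∃ k > 0, ∀ i, dist (traj f k (x i)) (traj f k (y i)) ≥ δ := by
  obtain ⟨p, hp⟩ := exists_ne (0 : X)
  have hpd : 0 < dist p 0 := dist_pos.mpr hp
  have htadd : ∀ k (a b : X), traj f k (a + b) = traj f k a + traj f k b := by
    intro k
    induction k with
    | zero => intro a b; rfl
    | succ k ih => intro a b; simp only [traj, Function.comp_apply, ih, (hlin k).map_add]
  refine ⟨dist p 0 / 2, by linarith, ?_⟩
  intro n hn x hx ε hε
  obtain ⟨N, hN, w0, ⟨w, hwU, hwe⟩, hwV⟩ :=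
    htrans (Metric.ball 0 ε) (Metric.ball p (dist p 0 / 2))
      Metric.isOpen_ball Metric.isOpen_ball
      ⟨0, by simpa using hε⟩ ⟨p, Metric.mem_ball_self (by linarith)⟩
  refine ⟨fun i => x i + w, ?_, N, hN, ?_⟩
  · intro i
    show dist (x i) (x i + w) < ε
    have h0 := htransinv 0 w (x i)
    rw [zero_add] at h0
    rw [add_comm (x i) w, h0, dist_comm]
    simpa using hwU
  · intro i
    show dist (traj f N (x i)) (traj f N (x i + w)) ≥ dist p 0 / 2
    have h1 : dist (traj f N (x i)) (traj f N (x i + w)) = dist 0 (traj f N w) := by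
      rw [htadd]
      have h0 := htransinv 0 (traj f N w) (traj f N (x i))
      rw [zero_add] at h0
      rw [add_comm (traj f N (x i)) (traj f N w), h0]
    rw [h1, hwe]
    have hd : dist w0 p < dist p 0 / 2 := by simpa [Metric.mem_ball] using hwV
    have htri : dist p 0 ≤ dist p w0 + dist w0 0 := dist_triangle _ _ _
    rw [dist_comm]
    rw [dist_comm p w0] at htri
    linarith
end
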